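/- arXiv:1112.1236 — 2 statements merged into one kernel-verified Lean document; each statement's English description precedes it below -/
import Mathlib

section
/- Let D be an integral domain and let *₁ and *₂ be star operations on D with *₁ ≤ *₂ (meaning I^{*₁} ⊆ I^{*₂} for every nonzero fractional ideal I of D). If D is *₁-sharp, then D is *₂-sharp. -/
open scoped nonZeroDivisors

/-- A star operation on an integral domain `D` with quotient field `K`: a map
`I ↦ I*` on (nonzero) fractional ideals such that `D* = D`, `(aI)* = a·I*`,
`I ⊆ I*`, `I ⊆ J → I* ⊆ J*` and `(I*)* = I*`. (The value at `0` is irrelevant.) -/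
structure StarOperation (D K : Type*) [CommRing D] [IsDomain D] [Field K]
    [Algebra D K] [IsFractionRing D K] where
  star : FractionalIdeal D⁰ K → FractionalIdeal D⁰ K
  star_one : star 1 = 1
  star_smul : ∀ (a : K), a ≠ 0 → ∀ I : FractionalIdeal D⁰ K, I ≠ 0 →
    star (FractionalIdeal.spanSingleton D⁰ a * I) = FractionalIdeal.spanSingleton D⁰ a * star I
  le_star : ∀ I : FractionalIdeal D⁰ K, I ≠ 0 → I ≤ star I
  star_mono : ∀ I J : FractionalIdeal D⁰ K, I ≠ 0 → J ≠ 0 → I ≤ J → star I ≤ star J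
  star_star : ∀ I : FractionalIdeal D⁰ K, I ≠ 0 → star (star I) = star I

section StarSharpDefs

variable {D K : Type*} [CommRing D] [IsDomain D] [Field K] [Algebra D K] [IsFractionRing D K]

/-- `D` is sharp with respect to the operation `star` ("`*`-sharp"): whenever
`I ⊇ A·B` for nonzero ideals `I, A, B` of `D`, there exist nonzero ideals `H, J`
with `I* = (HJ)*`, `H* ⊇ A` and `J* ⊇ B`. -/
def IsSharpOp (star : FractionalIdeal D⁰ K → FractionalIdeal D⁰ K) : Prop :=
  ∀ I A B : Ideal D, I ≠ 0 → A ≠ 0 → B ≠ 0 → A * B ≤ I →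
    ∃ H J : Ideal D, H ≠ 0 ∧ J ≠ 0 ∧
      star (I : FractionalIdeal D⁰ K) =
        star ((H : FractionalIdeal D⁰ K) * (J : FractionalIdeal D⁰ K)) ∧
      (A : FractionalIdeal D⁰ K) ≤ star (H : FractionalIdeal D⁰ K) ∧
      (B : FractionalIdeal D⁰ K) ≤ star (J : FractionalIdeal D⁰ K)

/-- `D` is `*`-sharp for the star operation `s`. -/
def StarOperation.IsSharp (s : StarOperation D K) : Prop :=
  IsSharpOp s.star

end StarSharpDefs

namespace StarOperation

variable {D K : Type*} [CommRing D] [IsDomain D] [Field K] [Algebra D K] [IsFractionRing D K]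

theorem star_ne_zero (s : StarOperation D K) {I : FractionalIdeal D⁰ K} (hI : I ≠ 0) :
    s.star I ≠ 0 :=
  ne_bot_of_le_ne_bot hI (s.le_star I hI)

theorem star_star_of_le {s₁ s₂ : StarOperation D K}
    (h12 : ∀ I : FractionalIdeal D⁰ K, I ≠ 0 → s₁.star I ≤ s₂.star I)
    {I : FractionalIdeal D⁰ K} (hI : I ≠ 0) :
    s₂.star (s₁.star I) = s₂.star I := by
  apply le_antisymm
  · calc s₂.star (s₁.star I) ≤ s₂.star (s₂.star I) :=
          s₂.star_mono _ _ (s₁.star_ne_zero hI) (s₂.star_ne_zero hI) (h12 I hI)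
      _ = s₂.star I := s₂.star_star I hI
  · exact s₂.star_mono _ _ hI (s₁.star_ne_zero hI) (s₁.le_star I hI)

end StarOperation

/-- If `*₁ ≤ *₂` are star operations on `D` and `D` is `*₁`-sharp,
then `D` is `*₂`-sharp. -/
theorem statement1 (D : Type*) [CommRing D] [IsDomain D]
    (K : Type*) [Field K] [Algebra D K] [IsFractionRing D K]
    (s₁ s₂ : StarOperation D K)
    (h12 : ∀ I : FractionalIdeal D⁰ K, I ≠ 0 → s₁.star I ≤ s₂.star I)
    (h : s₁.IsSharp) :
    s₂.IsSharp := by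
  intro I A B hI hA hB hAB
  obtain ⟨H, J, hH, hJ, hIHJ, hAH, hBJ⟩ := h I A B hI hA hB hAB
  have hH' : (H : FractionalIdeal D⁰ K) ≠ 0 := FractionalIdeal.coeIdeal_ne_zero.mpr hH
  have hJ' : (J : FractionalIdeal D⁰ K) ≠ 0 := FractionalIdeal.coeIdeal_ne_zero.mpr hJ
  have hHJ : (H : FractionalIdeal D⁰ K) * J ≠ 0 := by
    rw [← FractionalIdeal.coeIdeal_mul]
    exact FractionalIdeal.coeIdeal_ne_zero.mpr (mul_ne_zero hH hJ)
  refine ⟨H, J, hH, hJ, ?_, hAH.trans (h12 _ hH'), hBJ.trans (h12 _ hJ')⟩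
  rw [← StarOperation.star_star_of_le h12 (FractionalIdeal.coeIdeal_ne_zero.mpr hI), hIHJ,
    StarOperation.star_star_of_le h12 hHJ]
end

section
/- Let D be an integral domain and * a stable star operation of finite character on D such that D is *-sharp. If D is a TV domain (for instance, a Mori domain), then D is *-Dedekind. -/
open scoped nonZeroDivisors

section StarSharpDefs

variable {D K : Type*} [CommRing D] [IsDomain D] [Field K] [Algebra D K] [IsFractionRing D K]

/-- A star operation is stable if it distributes over (finite) intersections of
nonzero fractional ideals. -/
def StarOperation.IsStable (s : StarOperation D K) : Prop :=
  ∀ I J : FractionalIdeal D⁰ K, I ≠ 0 → J ≠ 0 → s.star (I ⊓ J) = s.star I ⊓ s.star J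

/-- A star operation has finite character if `I*` is the union of `H*` over the
nonzero finitely generated subideals `H` of `I`. -/
def StarOperation.HasFiniteCharacter (s : StarOperation D K) : Prop :=
  ∀ I : FractionalIdeal D⁰ K, I ≠ 0 → ∀ x ∈ s.star I,
    ∃ H : FractionalIdeal D⁰ K, H ≠ 0 ∧ (H : Submodule D K).FG ∧ H ≤ I ∧ x ∈ s.star H

/-- `D` is `*`-Dedekind if every nonzero fractional ideal `I` is `*`-invertible,
i.e. `(I·I⁻¹)* = D`. -/
def StarOperation.IsStarDedekind (s : StarOperation D K) : Prop :=
  ∀ I : FractionalIdeal D⁰ K, I ≠ 0 → s.star (I * I⁻¹) = 1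

lemma inv_ne_zero' {I : FractionalIdeal D⁰ K} (hI : I ≠ 0) : I⁻¹ ≠ 0 := by
  obtain ⟨d, hd, hdI⟩ := I.isFractional
  have hmem : algebraMap D K d ∈ I⁻¹ := by
    rw [FractionalIdeal.mem_inv_iff hI]
    intro y hy
    obtain ⟨c, hc⟩ := hdI y hy
    refine ⟨c, trivial, ?_⟩
    simpa [Algebra.smul_def] using hc
  intro h0
  rw [h0] at hmem
  have : algebraMap D K d ≠ 0 :=
    IsFractionRing.to_map_ne_zero_of_mem_nonZeroDivisors hd
  exact this (by simpa using hmem)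

/-- The `v`-operation `I ↦ I_v = (I⁻¹)⁻¹`. -/
noncomputable def vOp (I : FractionalIdeal D⁰ K) : FractionalIdeal D⁰ K := (I⁻¹)⁻¹

lemma vOp_mono {I J : FractionalIdeal D⁰ K} (h : I ≤ J) : vOp I ≤ vOp J := by
  rcases eq_or_ne I 0 with rfl | hI
  · show ((0 : FractionalIdeal D⁰ K)⁻¹)⁻¹ ≤ vOp J
    rw [FractionalIdeal.inv_zero', FractionalIdeal.inv_zero']
    exact FractionalIdeal.zero_le _
  have hJ : J ≠ 0 := fun hJ0 => hI (le_antisymm (hJ0 ▸ h) (FractionalIdeal.zero_le I))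
  exact FractionalIdeal.inv_anti_mono (inv_ne_zero' hJ) (inv_ne_zero' hI)
    (FractionalIdeal.inv_anti_mono hI hJ h)

/-- The `t`-operation: `I_t` is the union of `H_v` over the finitely generated
subideals `H` of `I`. -/
noncomputable def tOp (I : FractionalIdeal D⁰ K) : FractionalIdeal D⁰ K :=
  ⟨⨆ J : {J : FractionalIdeal D⁰ K // (J : Submodule D K).FG ∧ J ≤ I},
      ((vOp (J : FractionalIdeal D⁰ K) : FractionalIdeal D⁰ K) : Submodule D K),
    FractionalIdeal.isFractional_of_le (J := vOp I)
      (iSup_le fun J => FractionalIdeal.coe_le_coe.2 (vOp_mono J.2.2))⟩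

end StarSharpDefs

/-!
Sharpness applied to `(a) ⊇ A · aA⁻¹`, for a nonzero `a` in an integral ideal `A`, yields an
ideal `H` with `(HA⁻¹)* = D`; so `A⁻¹` is `*`-invertible, and therefore `(AA⁻¹)⁻¹ = D`.

Sharpness applied to `X₁² + X₂ ⊇ X₁ · X₁`, combined with stability and the modular law, shows that
two `*`-invertible integral ideals with `(X₁ + X₂)⁻¹ = D` are `*`-comaximal. Dividing `X₁` and
`X₂` by their sum `V` (where `V⁻¹` is `*`-invertible) makes them `v`-comaximal, so `V` is
`*`-invertible; hence every finitely generated ideal is `*`-invertible.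

For a nonzero integral `A` and `E = AA⁻¹` this gives `E_t = E_v = D` by the TV property, so a
finitely generated `J ⊆ E` has `J_v = D`. Being `*`-invertible, `J` satisfies `J* = J_v = D`, and
then `E* = D`.
-/

open FractionalIdeal

namespace FractionalIdeal

section Lattice

variable {R P : Type*} [CommRing R] {S : Submonoid R} [CommRing P] [Algebra R P]

instance : IsModularLattice (FractionalIdeal S P) :=
  ⟨fun {x} y {z} h => by
    rw [← coe_le_coe, coe_inf, coe_sup, coe_sup, coe_inf]
    exact IsModularLattice.sup_inf_le_assoc_of_le _ (coe_le_coe.2 h)⟩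

lemma ne_zero_of_le {I J : FractionalIdeal S P} (hI : I ≠ 0) (h : I ≤ J) : J ≠ 0 :=
  fun hJ => hI (le_zero_iff.1 (hJ ▸ h))

protected lemma sup_mul (I J C : FractionalIdeal S P) : (I ⊔ J) * C = I * C ⊔ J * C := by
  rw [sup_eq_add, sup_eq_add, add_mul]

protected lemma mul_sup (C I J : FractionalIdeal S P) : C * (I ⊔ J) = C * I ⊔ C * J := by
  rw [sup_eq_add, sup_eq_add, mul_add]

end Lattice

variable {D K : Type*} [CommRing D] [IsDomain D] [Field K] [Algebra D K] [IsFractionRing D K]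

instance : NoZeroDivisors (FractionalIdeal D⁰ K) where
  eq_zero_or_eq_zero_of_mul_eq_zero {I J} h := by
    by_contra! hIJ
    obtain ⟨x, hx, hx0⟩ := (Submodule.ne_bot_iff _).1 (coeToSubmodule_ne_bot.2 hIJ.1)
    obtain ⟨y, hy, hy0⟩ := (Submodule.ne_bot_iff _).1 (coeToSubmodule_ne_bot.2 hIJ.2)
    have hxy : x * y ∈ I * J := mul_mem_mul hx hy
    rw [h, mem_zero_iff] at hxy
    exact mul_ne_zero hx0 hy0 hxy

variable {I J P : FractionalIdeal D⁰ K}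

lemma le_inv_iff_mul_le (hJ : J ≠ 0) : I ≤ J⁻¹ ↔ I * J ≤ 1 := by
  rw [inv_eq]
  exact le_div_iff_mul_le hJ

lemma self_mul_inv_le_one (I : FractionalIdeal D⁰ K) : I * I⁻¹ ≤ 1 := by
  rw [inv_eq]
  exact mul_one_div_le_one

lemma mul_inv_of_mul_inv_cancel (hP : P * P⁻¹ = 1) (I : FractionalIdeal D⁰ K) :
    (P * I)⁻¹ = P⁻¹ * I⁻¹ := by
  rcases eq_or_ne I 0 with rfl | hI
  · rw [mul_zero, inv_zero', mul_zero]
  have hP0 : P ≠ 0 := by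
    rintro rfl
    rw [zero_mul] at hP
    exact zero_ne_one hP
  refine le_antisymm ?_ ((le_inv_iff_mul_le (mul_ne_zero hP0 hI)).2 ?_)
  · have h : P * (P * I)⁻¹ ≤ I⁻¹ := (le_inv_iff_mul_le hI).2 <| by
      rw [mul_right_comm]
      exact self_mul_inv_le_one (P * I)
    calc (P * I)⁻¹ = P⁻¹ * (P * (P * I)⁻¹) := by rw [← mul_assoc, mul_comm P⁻¹, hP, one_mul]
      _ ≤ P⁻¹ * I⁻¹ := mul_le_mul_right h _
  · calc P⁻¹ * I⁻¹ * (P * I) = (P * P⁻¹) * (I * I⁻¹) := by ring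
      _ ≤ 1 := by rw [hP, one_mul]; exact self_mul_inv_le_one I

end FractionalIdeal

lemma exists_fg_le_mem_vOp_of_mem_tOp {D K : Type*} [CommRing D] [IsDomain D] [Field K]
    [Algebra D K] [IsFractionRing D K] {I : FractionalIdeal D⁰ K} {x : K} (hx : x ∈ tOp I) :
    ∃ J : FractionalIdeal D⁰ K, (J : Submodule D K).FG ∧ J ≤ I ∧ x ∈ vOp J := by
  let ι := {J : FractionalIdeal D⁰ K // (J : Submodule D K).FG ∧ J ≤ I}
  have : Nonempty ι := ⟨⟨0, by rw [coe_zero]; exact Submodule.fg_bot, zero_le _⟩⟩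
  have hdir : Directed (· ≤ ·) fun J : ι => (vOp J.1 : Submodule D K) := fun J₁ J₂ =>
    ⟨⟨J₁.1 ⊔ J₂.1, by rw [coe_sup]; exact J₁.2.1.sup J₂.2.1, sup_le J₁.2.2 J₂.2.2⟩,
      coe_le_coe.2 (vOp_mono le_sup_left), coe_le_coe.2 (vOp_mono le_sup_right)⟩
  obtain ⟨⟨J, hJ, hJI⟩, hxJ⟩ := (Submodule.mem_iSup_of_directed _ hdir).1 (mem_coe.2 hx)
  exact ⟨J, hJ, hJI, hxJ⟩

namespace StarOperation

variable {D K : Type*} [CommRing D] [IsDomain D] [Field K] [Algebra D K] [IsFractionRing D K]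
variable (s : StarOperation D K) {I J T W : FractionalIdeal D⁰ K}

lemma star_ne_zero_s5 (hI : I ≠ 0) : s.star I ≠ 0 :=
  ne_zero_of_le hI (s.le_star I hI)

lemma star_le_star (hI : I ≠ 0) (h : I ≤ J) : s.star I ≤ s.star J :=
  s.star_mono I J hI (ne_zero_of_le hI h) h

lemma star_le_one (hI : I ≠ 0) (h : I ≤ 1) : s.star I ≤ 1 :=
  s.star_one ▸ s.star_le_star hI h

lemma star_spanSingleton {x : K} (hx : x ≠ 0) :
    s.star (spanSingleton D⁰ x) = spanSingleton D⁰ x := by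
  simpa [s.star_one] using s.star_smul x hx 1 one_ne_zero

lemma mul_star_le (hJ : J ≠ 0) : I * s.star J ≤ s.star (I * J) := by
  refine mul_le.2 fun x hx y hy => ?_
  rcases eq_or_ne x 0 with rfl | hx0
  · rw [zero_mul]
    exact zero_mem _
  have hxy : x * y ∈ s.star (spanSingleton D⁰ x * J) := by
    rw [s.star_smul x hx0 J hJ]
    exact mul_mem_mul (mem_spanSingleton_self _ _) hy
  exact s.star_le_star (mul_ne_zero (spanSingleton_ne_zero_iff.2 hx0) hJ)
    (mul_le_mul_left (spanSingleton_le_iff_mem.2 hx) J) hxy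

lemma star_mul_le (hI : I ≠ 0) : s.star I * J ≤ s.star (I * J) := by
  rw [mul_comm, mul_comm I]
  exact s.mul_star_le hI

lemma star_mul_star (hI : I ≠ 0) (hJ : J ≠ 0) : s.star (I * s.star J) = s.star (I * J) := by
  refine le_antisymm ?_ (s.star_le_star (mul_ne_zero hI hJ) (mul_le_mul_right (s.le_star J hJ) I))
  calc s.star (I * s.star J) ≤ s.star (s.star (I * J)) :=
        s.star_le_star (mul_ne_zero hI (s.star_ne_zero_s5 hJ)) (s.mul_star_le hJ)
    _ = s.star (I * J) := s.star_star _ (mul_ne_zero hI hJ)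

lemma star_star_mul (hI : I ≠ 0) (hJ : J ≠ 0) : s.star (s.star I * J) = s.star (I * J) := by
  rw [mul_comm, mul_comm I]
  exact s.star_mul_star hJ hI

lemma star_mul_eq_of_star_eq_one (hI : I ≠ 0) (hW : W ≠ 0) (h : s.star W = 1) :
    s.star (I * W) = s.star I := by
  rw [← s.star_mul_star hI hW, h, mul_one]

lemma le_star_of_mul_le (hW : W ≠ 0) (h1 : s.star W = 1) (h : I * W ≤ T) : I ≤ s.star T := by
  rcases eq_or_ne I 0 with rfl | hI
  · exact zero_le _
  calc I = I * s.star W := by rw [h1, mul_one]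
    _ ≤ s.star (I * W) := s.mul_star_le hW
    _ ≤ s.star T := s.star_le_star (mul_ne_zero hI hW) h

lemma star_le_vOp (hI : I ≠ 0) : s.star I ≤ vOp I :=
  (le_inv_iff_mul_le (inv_ne_zero' hI)).2 <|
    (s.star_mul_le hI).trans
      (s.star_le_one (mul_ne_zero hI (inv_ne_zero' hI)) (self_mul_inv_le_one I))

def IsStarInvertible (I : FractionalIdeal D⁰ K) : Prop :=
  s.star (I * I⁻¹) = 1

variable {s} {X Y A B X₁ X₂ : FractionalIdeal D⁰ K}

lemma isStarInvertible_of_star_mul_eq_one (hX : X ≠ 0) (hW : W ≠ 0) (h : s.star (X * W) = 1) :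
    s.IsStarInvertible X := by
  have hWX : W ≤ X⁻¹ := (le_inv_iff_mul_le hX).2 <| by
    rw [mul_comm, ← h]
    exact s.le_star _ (mul_ne_zero hX hW)
  refine le_antisymm (s.star_le_one (mul_ne_zero hX (inv_ne_zero' hX)) (self_mul_inv_le_one X)) ?_
  rw [← h]
  exact s.star_le_star (mul_ne_zero hX hW) (mul_le_mul_right hWX X)

lemma isStarInvertible_spanSingleton {x : K} (hx : x ≠ 0) :
    s.IsStarInvertible (spanSingleton D⁰ x) := by
  rw [IsStarInvertible, spanSingleton_mul_inv K hx, s.star_one]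

lemma IsStarInvertible.mul (hX : s.IsStarInvertible X) (hY : s.IsStarInvertible Y)
    (hX0 : X ≠ 0) (hY0 : Y ≠ 0) : s.IsStarInvertible (X * Y) := by
  refine isStarInvertible_of_star_mul_eq_one (mul_ne_zero hX0 hY0)
    (mul_ne_zero (inv_ne_zero' hX0) (inv_ne_zero' hY0)) ?_
  rw [mul_mul_mul_comm, s.star_mul_eq_of_star_eq_one (mul_ne_zero hX0 (inv_ne_zero' hX0))
    (mul_ne_zero hY0 (inv_ne_zero' hY0)) hY]
  exact hX

lemma IsStarInvertible.star_eq_vOp (hX : s.IsStarInvertible X) (hX0 : X ≠ 0) :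
    s.star X = vOp X := by
  refine le_antisymm (s.star_le_vOp hX0)
    (s.le_star_of_mul_le (mul_ne_zero hX0 (inv_ne_zero' hX0)) hX ?_)
  calc vOp X * (X * X⁻¹) = X⁻¹⁻¹ * X⁻¹ * X := by rw [vOp]; ring
    _ ≤ 1 * X := mul_le_mul_left (by rw [mul_comm]; exact self_mul_inv_le_one _) X
    _ = X := one_mul X

lemma IsStarInvertible.le_star_inv_mul (hX : s.IsStarInvertible X) (hX0 : X ≠ 0) (hT : T ≠ 0)
    (h : X * I ≤ s.star T) : I ≤ s.star (X⁻¹ * T) := by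
  have hXT : X⁻¹ * T ≠ 0 := mul_ne_zero (inv_ne_zero' hX0) hT
  rw [← s.star_star _ hXT]
  refine s.le_star_of_mul_le (mul_ne_zero hX0 (inv_ne_zero' hX0)) hX ?_
  calc I * (X * X⁻¹) = X⁻¹ * (X * I) := by ring
    _ ≤ X⁻¹ * s.star T := mul_le_mul_right h _
    _ ≤ s.star (X⁻¹ * T) := s.mul_star_le hT

lemma mul_inv_self_inv_eq_one (hI : I ≠ 0) (hI' : s.IsStarInvertible I⁻¹) :
    (I * I⁻¹)⁻¹ = 1 := by
  have hE : I * I⁻¹ ≠ 0 := mul_ne_zero hI (inv_ne_zero' hI)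
  refine le_antisymm ?_ ?_
  · set Z := (I * I⁻¹)⁻¹
    have hZ : Z * I⁻¹ ≤ I⁻¹ := (le_inv_iff_mul_le hI).2 <| by
      rw [mul_assoc, mul_comm I⁻¹, mul_comm]
      exact self_mul_inv_le_one _
    have h := s.le_star_of_mul_le (mul_ne_zero (inv_ne_zero' hI) (inv_ne_zero' (inv_ne_zero' hI)))
      hI' (T := 1) (I := Z) <| by
        rw [← mul_assoc]
        exact (mul_le_mul_left hZ _).trans (self_mul_inv_le_one _)
    rwa [s.star_one] at h
  · calc (1 : FractionalIdeal D⁰ K) = 1⁻¹ := inv_one.symm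
      _ ≤ (I * I⁻¹)⁻¹ := inv_anti_mono hE one_ne_zero (self_mul_inv_le_one I)

lemma IsSharp.exists_star_eq_star_mul (hsharp : s.IsSharp) (hI0 : I ≠ 0) (hA0 : A ≠ 0)
    (hB0 : B ≠ 0) (hI1 : I ≤ 1) (hA1 : A ≤ 1) (hB1 : B ≤ 1) (h : A * B ≤ I) :
    ∃ H J : FractionalIdeal D⁰ K, H ≠ 0 ∧ J ≠ 0 ∧ H ≤ 1 ∧ J ≤ 1 ∧
      s.star I = s.star (H * J) ∧ A ≤ s.star H ∧ B ≤ s.star J := by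
  obtain ⟨I, rfl⟩ := le_one_iff_exists_coeIdeal.1 hI1
  obtain ⟨A, rfl⟩ := le_one_iff_exists_coeIdeal.1 hA1
  obtain ⟨B, rfl⟩ := le_one_iff_exists_coeIdeal.1 hB1
  rw [← coeIdeal_mul, coeIdeal_le_coeIdeal] at h
  obtain ⟨H, J, hH0, hJ0, hIHJ, hAH, hBJ⟩ :=
    hsharp I A B (coeIdeal_ne_zero.1 hI0) (coeIdeal_ne_zero.1 hA0) (coeIdeal_ne_zero.1 hB0) h
  exact ⟨H, J, coeIdeal_ne_zero.2 hH0, coeIdeal_ne_zero.2 hJ0, coeIdeal_le_one, coeIdeal_le_one,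
    hIHJ, hAH, hBJ⟩

lemma IsSharp.exists_star_inv_mul_eq_one (hsharp : s.IsSharp) (hA0 : A ≠ 0) (hA1 : A ≤ 1) :
    ∃ H : FractionalIdeal D⁰ K, H ≠ 0 ∧ s.star (A⁻¹ * H) = 1 := by
  obtain ⟨a, haA, ha0⟩ : ∃ a ∈ A, a ≠ 0 := by
    by_contra! h
    exact hA0 (eq_zero_iff.2 h)
  set P := spanSingleton D⁰ a
  have hP0 : P ≠ 0 := spanSingleton_ne_zero_iff.2 ha0
  have hPA : P ≤ A := spanSingleton_le_iff_mem.2 haA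
  have hPP : P⁻¹ * P = 1 := spanSingleton_inv_mul K ha0
  have hB0 : P * A⁻¹ ≠ 0 := mul_ne_zero hP0 (inv_ne_zero' hA0)
  have hAB : A * (P * A⁻¹) ≤ P := by
    rw [mul_left_comm]
    exact mul_le_of_le_one_right' (self_mul_inv_le_one A)
  obtain ⟨H, J, hH0, hJ0, -, -, hPHJ, hAH, hBJ⟩ := hsharp.exists_star_eq_star_mul hP0 hA0 hB0
    (hPA.trans hA1) hA1 ((mul_le_mul_left hPA _).trans (self_mul_inv_le_one A)) hAB
  replace hPHJ : P = s.star (H * J) := (s.star_spanSingleton ha0).symm.trans hPHJ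
  have hAJ : A * J ≤ P := calc
    A * J ≤ s.star H * J := mul_le_mul_left hAH J
    _ ≤ s.star (H * J) := s.star_mul_le hH0
    _ = P := hPHJ.symm
  have hJB : J ≤ P * A⁻¹ := calc
    J = P * (P⁻¹ * J) := by rw [← mul_assoc, mul_comm P, hPP, one_mul]
    _ ≤ P * A⁻¹ := mul_le_mul_right ((le_inv_iff_mul_le hA0).2 <| by
        rw [mul_assoc, mul_comm J, ← hPP]
        exact mul_le_mul_right hAJ _) P
  have hHB : s.star (P * (A⁻¹ * H)) = P := by
    rw [show P * (A⁻¹ * H) = H * (P * A⁻¹) by ring]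
    refine le_antisymm ?_
      (hPHJ.trans_le (s.star_le_star (mul_ne_zero hH0 hJ0) (mul_le_mul_right hJB H)))
    calc s.star (H * (P * A⁻¹)) ≤ s.star (H * s.star J) :=
          s.star_le_star (mul_ne_zero hH0 hB0) (mul_le_mul_right hBJ H)
      _ = P := by rw [s.star_mul_star hH0 hJ0, hPHJ]
  refine ⟨H, hH0, ?_⟩
  rw [s.star_smul a ha0 _ (mul_ne_zero (inv_ne_zero' hA0) hH0)] at hHB
  rw [← one_mul (s.star _), ← hPP, mul_assoc, hHB, hPP]

lemma IsSharp.isStarInvertible_inv (hsharp : s.IsSharp) (hA0 : A ≠ 0) (hA1 : A ≤ 1) :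
    s.IsStarInvertible A⁻¹ :=
  let ⟨_, hH0, hH⟩ := hsharp.exists_star_inv_mul_eq_one hA0 hA1
  isStarInvertible_of_star_mul_eq_one (inv_ne_zero' hA0) hH0 hH

lemma mul_inv_inf_one_le_star (hX₂ : s.IsStarInvertible X₂) (hX₂0 : X₂ ≠ 0)
    (hcop : (X₁ ⊔ X₂)⁻¹ = 1) : X₂ * X₁⁻¹ ⊓ 1 ≤ s.star X₂ := by
  set W := X₂ * X₁⁻¹ ⊓ 1
  have hW : W * X₂⁻¹ ≤ 1 := by
    rw [← hcop, le_inv_iff_mul_le (ne_zero_of_le hX₂0 le_sup_right), FractionalIdeal.mul_sup]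
    refine sup_le ?_ ?_
    · calc W * X₂⁻¹ * X₁ ≤ X₂ * X₁⁻¹ * X₂⁻¹ * X₁ := by gcongr; exact inf_le_left
        _ = (X₂ * X₂⁻¹) * (X₁ * X₁⁻¹) := by ring
        _ ≤ 1 := mul_le_one' (self_mul_inv_le_one X₂) (self_mul_inv_le_one X₁)
    · calc W * X₂⁻¹ * X₂ ≤ 1 * X₂⁻¹ * X₂ := by gcongr; exact inf_le_right
        _ ≤ 1 := by rw [one_mul, mul_comm]; exact self_mul_inv_le_one X₂
  refine s.le_star_of_mul_le (mul_ne_zero hX₂0 (inv_ne_zero' hX₂0)) hX₂ ?_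
  calc W * (X₂ * X₂⁻¹) = W * X₂⁻¹ * X₂ := by ring
    _ ≤ X₂ := mul_le_of_le_one_left' hW

lemma le_star_sup_of_mul_le_star (hst : s.IsStable) (hX₁ : s.IsStarInvertible X₁)
    (hX₁0 : X₁ ≠ 0) (hX₂0 : X₂ ≠ 0) (hX₁1 : X₁ ≤ 1) (hα : X₂ * X₁⁻¹ ⊓ 1 ≤ s.star X₂)
    {W : FractionalIdeal D⁰ K} (hW1 : W ≤ 1) (h : X₁ * W ≤ s.star (X₁ * X₁ ⊔ X₂)) :
    W ≤ s.star (X₁ ⊔ X₂) := by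
  set U := X₁ ⊔ X₂ * X₁⁻¹
  have hU0 : U ≠ 0 := ne_zero_of_le hX₁0 le_sup_left
  have hV0 : X₁ ⊔ X₂ ≠ 0 := ne_zero_of_le hX₁0 le_sup_left
  have hWU : W ≤ s.star U := by
    refine (hX₁.le_star_inv_mul hX₁0 (ne_zero_of_le hX₂0 le_sup_right) h).trans
      (s.star_le_star (mul_ne_zero (inv_ne_zero' hX₁0) (ne_zero_of_le hX₂0 le_sup_right)) ?_)
    rw [FractionalIdeal.mul_sup, mul_comm X₁⁻¹ X₂]
    refine sup_le_sup_right ?_ _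
    rw [mul_left_comm]
    exact mul_le_of_le_one_right' (by rw [mul_comm]; exact self_mul_inv_le_one X₁)
  calc W ≤ s.star (U ⊓ 1) := by
        rw [hst U 1 hU0 one_ne_zero, s.star_one]
        exact le_inf hWU hW1
    _ = s.star (X₁ ⊔ X₂ * X₁⁻¹ ⊓ 1) := by rw [sup_inf_assoc_of_le _ hX₁1]
    _ ≤ s.star (s.star (X₁ ⊔ X₂)) := s.star_le_star (ne_zero_of_le hX₁0 le_sup_left)
        (sup_le (le_sup_left.trans (s.le_star _ hV0))
          (hα.trans (s.star_le_star hX₂0 le_sup_right)))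
    _ = s.star (X₁ ⊔ X₂) := s.star_star _ hV0

lemma star_mul_self_sup_le_star_mul_self (hsharp : s.IsSharp) (hst : s.IsStable)
    (hX₁ : s.IsStarInvertible X₁) (hX₁0 : X₁ ≠ 0) (hX₂0 : X₂ ≠ 0) (hX₁1 : X₁ ≤ 1) (hX₂1 : X₂ ≤ 1)
    (hα : X₂ * X₁⁻¹ ⊓ 1 ≤ s.star X₂) :
    s.star (X₁ * X₁ ⊔ X₂) ≤ s.star ((X₁ ⊔ X₂) * (X₁ ⊔ X₂)) := by
  have hV0 : X₁ ⊔ X₂ ≠ 0 := ne_zero_of_le hX₁0 le_sup_left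
  obtain ⟨H, J, hH0, hJ0, hH1, hJ1, hIHJ, hXH, hXJ⟩ :=
    hsharp.exists_star_eq_star_mul (ne_zero_of_le hX₂0 le_sup_right) hX₁0 hX₁0
      (sup_le (mul_le_one' hX₁1 hX₁1) hX₂1) hX₁1 hX₁1 le_sup_left
  have hHV : H ≤ s.star (X₁ ⊔ X₂) := le_star_sup_of_mul_le_star hst hX₁ hX₁0 hX₂0 hX₁1 hα hH1 <|
    calc X₁ * H ≤ s.star J * H := mul_le_mul_left hXJ H
      _ ≤ s.star (J * H) := s.star_mul_le hJ0
      _ = s.star (X₁ * X₁ ⊔ X₂) := by rw [mul_comm, hIHJ]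
  have hJV : J ≤ s.star (X₁ ⊔ X₂) := le_star_sup_of_mul_le_star hst hX₁ hX₁0 hX₂0 hX₁1 hα hJ1 <|
    calc X₁ * J ≤ s.star H * J := mul_le_mul_left hXH J
      _ ≤ s.star (H * J) := s.star_mul_le hH0
      _ = s.star (X₁ * X₁ ⊔ X₂) := hIHJ.symm
  calc s.star (X₁ * X₁ ⊔ X₂) = s.star (H * J) := hIHJ
    _ ≤ s.star (s.star (X₁ ⊔ X₂) * s.star (X₁ ⊔ X₂)) :=
        s.star_le_star (mul_ne_zero hH0 hJ0) (mul_le_mul' hHV hJV)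
    _ = s.star ((X₁ ⊔ X₂) * (X₁ ⊔ X₂)) := by
        rw [s.star_star_mul hV0 (s.star_ne_zero_s5 hV0), s.star_mul_star hV0 hV0]

lemma mul_self_inf_le_star_mul (hX₁ : s.IsStarInvertible X₁) (hX₁0 : X₁ ≠ 0) (hX₂0 : X₂ ≠ 0)
    (hX₁1 : X₁ ≤ 1) (hα : X₂ * X₁⁻¹ ⊓ 1 ≤ s.star X₂) : X₁ * X₁ ⊓ X₂ ≤ s.star (X₂ * X₁) := by
  set Z := X₁ * X₁ ⊓ X₂
  have hZ : Z * X₁⁻¹ ≤ s.star X₂ := by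
    refine le_trans (le_inf (mul_le_mul_left inf_le_right _) ?_) hα
    calc Z * X₁⁻¹ ≤ X₁ * X₁ * X₁⁻¹ := mul_le_mul_left inf_le_left _
      _ = X₁ * (X₁ * X₁⁻¹) := mul_assoc _ _ _
      _ ≤ 1 := mul_le_one' hX₁1 (self_mul_inv_le_one X₁)
  rw [← s.star_star _ (mul_ne_zero hX₂0 hX₁0)]
  refine s.le_star_of_mul_le (mul_ne_zero hX₁0 (inv_ne_zero' hX₁0)) hX₁ ?_
  calc Z * (X₁ * X₁⁻¹) = Z * X₁⁻¹ * X₁ := by ring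
    _ ≤ s.star X₂ * X₁ := mul_le_mul_left hZ _
    _ ≤ s.star (X₂ * X₁) := s.star_mul_le hX₂0

theorem star_sup_eq_one_of_inv_sup_eq_one (hsharp : s.IsSharp) (hst : s.IsStable)
    (hX₁ : s.IsStarInvertible X₁) (hX₂ : s.IsStarInvertible X₂) (hX₁0 : X₁ ≠ 0) (hX₂0 : X₂ ≠ 0)
    (hX₁1 : X₁ ≤ 1) (hX₂1 : X₂ ≤ 1) (hcop : (X₁ ⊔ X₂)⁻¹ = 1) : s.star (X₁ ⊔ X₂) = 1 := by
  set V := X₁ ⊔ X₂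
  have hV0 : V ≠ 0 := ne_zero_of_le hX₁0 le_sup_left
  have hX₂V0 : X₂ * V ≠ 0 := mul_ne_zero hX₂0 hV0
  have hα := mul_inv_inf_one_le_star hX₂ hX₂0 hcop
  have hVV : V * V ≤ X₂ * V ⊔ X₁ * X₁ := by
    rw [FractionalIdeal.sup_mul, FractionalIdeal.mul_sup, mul_comm X₁ X₂]
    exact sup_le (sup_le le_sup_right ((mul_le_mul_right le_sup_left X₂).trans le_sup_left))
      le_sup_left
  have hX₂VV : X₂ ≤ s.star (V * V ⊓ X₂) := by
    rw [hst _ _ (mul_ne_zero hV0 hV0) hX₂0]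
    refine le_inf ?_ (s.le_star X₂ hX₂0)
    exact (le_sup_right.trans (s.le_star _ (ne_zero_of_le hX₂0 le_sup_right))).trans
      (star_mul_self_sup_le_star_mul_self hsharp hst hX₁ hX₁0 hX₂0 hX₁1 hX₂1 hα)
  -- By the modular law `V² ∩ X₂ ⊆ X₂V + (X₁² ∩ X₂)`; then `X₂ ⊆ (X₂V)*`, and `X₂` cancels.
  have hX₂V : X₂ ≤ s.star (X₂ * V) := calc
    X₂ ≤ s.star (V * V ⊓ X₂) := hX₂VV
    _ ≤ s.star (s.star (X₂ * V)) := by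
      refine s.star_le_star (ne_zero_of_le (mul_ne_zero hX₂0 hX₂0)
        (le_inf (mul_le_mul' le_sup_right le_sup_right) (mul_le_of_le_one_left' hX₂1))) ?_
      refine (inf_le_inf_right X₂ hVV).trans ?_
      rw [sup_inf_assoc_of_le _ (mul_le_of_le_one_right' (sup_le hX₁1 hX₂1))]
      exact sup_le (s.le_star _ hX₂V0) ((mul_self_inf_le_star_mul hX₁ hX₁0 hX₂0 hX₁1 hα).trans
        (s.star_le_star (mul_ne_zero hX₂0 hX₁0) (mul_le_mul_right le_sup_left X₂)))
    _ = s.star (X₂ * V) := s.star_star _ hX₂V0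
  refine le_antisymm (s.star_le_one hV0 (sup_le hX₁1 hX₂1)) ?_
  calc 1 ≤ s.star (X₂⁻¹ * (X₂ * V)) := hX₂.le_star_inv_mul hX₂0 hX₂V0 (by rwa [mul_one])
    _ = s.star V := by
      rw [show X₂⁻¹ * (X₂ * V) = V * (X₂ * X₂⁻¹) by ring,
        s.star_mul_eq_of_star_eq_one hV0 (mul_ne_zero hX₂0 (inv_ne_zero' hX₂0)) hX₂]

theorem IsStarInvertible.sup (hsharp : s.IsSharp) (hst : s.IsStable)
    (hX₁ : s.IsStarInvertible X₁) (hX₂ : s.IsStarInvertible X₂) (hX₁0 : X₁ ≠ 0) (hX₂0 : X₂ ≠ 0)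
    (hX₁1 : X₁ ≤ 1) (hX₂1 : X₂ ≤ 1) : s.IsStarInvertible (X₁ ⊔ X₂) := by
  set V := X₁ ⊔ X₂
  have hV0 : V ≠ 0 := ne_zero_of_le hX₁0 le_sup_left
  have hVinv : s.IsStarInvertible V⁻¹ := hsharp.isStarInvertible_inv hV0 (sup_le hX₁1 hX₂1)
  have hV : V * V⁻¹ = X₁ * V⁻¹ ⊔ X₂ * V⁻¹ := FractionalIdeal.sup_mul _ _ _
  have hle {X : FractionalIdeal D⁰ K} (h : X ≤ V) : X * V⁻¹ ≤ 1 :=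
    (mul_le_mul_left h _).trans (self_mul_inv_le_one V)
  have hV' := star_sup_eq_one_of_inv_sup_eq_one hsharp hst (hX₁.mul hVinv hX₁0 (inv_ne_zero' hV0))
    (hX₂.mul hVinv hX₂0 (inv_ne_zero' hV0)) (mul_ne_zero hX₁0 (inv_ne_zero' hV0))
    (mul_ne_zero hX₂0 (inv_ne_zero' hV0)) (hle le_sup_left) (hle le_sup_right)
    (hV ▸ mul_inv_self_inv_eq_one hV0 hVinv)
  rwa [← hV] at hV'

theorem isStarInvertible_of_fg (hsharp : s.IsSharp) (hst : s.IsStable) {F : FractionalIdeal D⁰ K}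
    (hF : (F : Submodule D K).FG) (hF0 : F ≠ 0) (hF1 : F ≤ 1) : s.IsStarInvertible F := by
  suffices ∀ N : Submodule D K, N.FG → ∀ F : FractionalIdeal D⁰ K, (F : Submodule D K) = N →
      F ≠ 0 → F ≤ 1 → s.IsStarInvertible F from this _ hF F rfl hF0 hF1
  intro N hN
  induction N, hN using Submodule.fg_induction with
  | singleton x =>
    rintro F hF hF0 -
    obtain rfl : F = spanSingleton D⁰ x :=
      coeToSubmodule_injective (hF.trans (coe_spanSingleton _ _).symm)
    exact isStarInvertible_spanSingleton (spanSingleton_ne_zero_iff.1 hF0)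
  | sup N₁ N₂ _ _ ih₁ ih₂ =>
    rintro F hF hF0 hF1
    let F₁ : FractionalIdeal D⁰ K := ⟨N₁, isFractional_of_le (J := F) (hF ▸ le_sup_left)⟩
    let F₂ : FractionalIdeal D⁰ K := ⟨N₂, isFractional_of_le (J := F) (hF ▸ le_sup_right)⟩
    have hFeq : F = F₁ ⊔ F₂ := coeToSubmodule_injective (hF.trans (coe_sup F₁ F₂).symm)
    rw [hFeq] at hF0 hF1 ⊢
    rcases eq_or_ne F₁ 0 with h₁ | h₁
    · rw [h₁, ← FractionalIdeal.bot_eq_zero, bot_sup_eq] at hF0 hF1 ⊢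
      exact ih₂ F₂ rfl hF0 hF1
    rcases eq_or_ne F₂ 0 with h₂ | h₂
    · rw [h₂, ← FractionalIdeal.bot_eq_zero, sup_bot_eq] at hF0 hF1 ⊢
      exact ih₁ F₁ rfl hF0 hF1
    exact (ih₁ F₁ rfl h₁ (le_sup_left.trans hF1)).sup hsharp hst
      (ih₂ F₂ rfl h₂ (le_sup_right.trans hF1)) h₁ h₂ (le_sup_left.trans hF1)
      (le_sup_right.trans hF1)

end StarOperation

theorem statement5_general (D : Type*) [CommRing D] [IsDomain D]
    (K : Type*) [Field K] [Algebra D K] [IsFractionRing D K]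
    (s : StarOperation D K) (hst : s.IsStable)
    (hsharp : s.IsSharp)
    (hTV : ∀ I : Ideal D, I ≠ 0 → tOp (I : FractionalIdeal D⁰ K) = vOp (I : FractionalIdeal D⁰ K)) :
    s.IsStarDedekind := by
  intro I hI
  obtain ⟨a, A, ha, rfl⟩ := exists_eq_spanSingleton_mul I
  have hA0 : (A : FractionalIdeal D⁰ K) ≠ 0 := right_ne_zero_of_mul hI
  have ha' : (algebraMap D K a)⁻¹ ≠ 0 :=
    inv_ne_zero ((map_ne_zero_iff _ (IsFractionRing.injective D K)).2 ha)
  rw [mul_inv_of_mul_inv_cancel (spanSingleton_mul_inv K ha'), mul_mul_mul_comm,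
    spanSingleton_mul_inv K ha', one_mul]
  set E := (A : FractionalIdeal D⁰ K) * (A : FractionalIdeal D⁰ K)⁻¹
  have hE0 : E ≠ 0 := mul_ne_zero hA0 (inv_ne_zero' hA0)
  have hE1 : E ≤ 1 := self_mul_inv_le_one _
  have hvE : vOp E = 1 := by
    rw [vOp, StarOperation.mul_inv_self_inv_eq_one hA0
      (hsharp.isStarInvertible_inv hA0 coeIdeal_le_one), inv_one]
  obtain ⟨E₀, hE₀⟩ := le_one_iff_exists_coeIdeal.1 hE1
  have h1 : (1 : K) ∈ tOp E := by
    rw [← hE₀, hTV E₀ (coeIdeal_ne_zero.1 (hE₀ ▸ hE0)), hE₀, hvE]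
    exact one_mem_one _
  obtain ⟨J, hJfg, hJE, h1J⟩ := exists_fg_le_mem_vOp_of_mem_tOp h1
  have hJ0 : J ≠ 0 := by
    rintro rfl
    rw [vOp, inv_zero', inv_zero', mem_zero_iff] at h1J
    exact one_ne_zero h1J
  have hJ : s.IsStarInvertible J :=
    StarOperation.isStarInvertible_of_fg hsharp hst hJfg hJ0 (hJE.trans hE1)
  have hJ1 : 1 ≤ s.star J := by
    rw [hJ.star_eq_vOp hJ0, ← spanSingleton_one]
    exact spanSingleton_le_iff_mem.2 h1J
  exact le_antisymm (s.star_le_one hE0 hE1) (hJ1.trans (s.star_le_star hJ0 hJE))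

/-- Let `*` be a stable star operation of finite character on `D`
such that `D` is `*`-sharp. If `D` is a TV domain (`I_t = I_v` for every nonzero
ideal `I`), then `D` is `*`-Dedekind. -/
theorem statement5 (D : Type*) [CommRing D] [IsDomain D]
    (K : Type*) [Field K] [Algebra D K] [IsFractionRing D K]
    (s : StarOperation D K) (hst : s.IsStable) (hfc : s.HasFiniteCharacter)
    (hsharp : s.IsSharp)
    (hTV : ∀ I : Ideal D, I ≠ 0 → tOp (I : FractionalIdeal D⁰ K) = vOp (I : FractionalIdeal D⁰ K)) :
    s.IsStarDedekind :=
  statement5_general D K s hst hsharp hTV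
end
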